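/- arXiv:1307.0153 — 11 statements merged into one kernel-verified Lean document; each statement's English description precedes it below -/
import Mathlib

section
/- The sequence g defined by g(0)=0 and g(n)=n-g(g(n-1)) for n≥1 satisfies g(n) = ⌊α(n+1)⌋ for all n≥0, where α = (√5 - 1)/2. -/
private lemma hof_alpha_irr : Irrational ((Real.sqrt 5 - 1) / 2) := by
  have h : Irrational (Real.sqrt 5) := (by norm_num : Nat.Prime 5).irrational_sqrt
  have h2 := (h.sub_intCast 1).div_intCast (m := 2) (by norm_num)
  simpa using h2

private lemma hof_key (n : ℕ) (hn : 1 ≤ n) :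
    ⌊(Real.sqrt 5 - 1) / 2 * ((⌊(Real.sqrt 5 - 1) / 2 * n⌋ : ℝ) + 1)⌋
      = n - ⌊(Real.sqrt 5 - 1) / 2 * (n + 1)⌋ := by
  set α : ℝ := (Real.sqrt 5 - 1) / 2 with hα
  have h5 : (Real.sqrt 5)^2 = 5 := Real.sq_sqrt (by norm_num)
  have hs2 : 2 < Real.sqrt 5 := by nlinarith [Real.sqrt_nonneg 5]
  have hs3 : Real.sqrt 5 < 3 := by nlinarith [Real.sqrt_nonneg 5]
  have hα0 : 0 < α := by rw [hα]; linarith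
  have hα1 : α < 1 := by rw [hα]; linarith
  have hα2 : α^2 = 1 - α := by rw [hα]; nlinarith
  have hnr : (1:ℝ) ≤ (n:ℝ) := by exact_mod_cast hn
  have hirr1 : Irrational (α * (n+1)) := by
    have := (hof_alpha_irr.natCast_mul (m := n+1) (by omega))
    rw [mul_comm] at this
    convert this using 2
    push_cast; ring
  have hirrn : Irrational (α * n) := by
    have := (hof_alpha_irr.natCast_mul (m := n) (by omega))
    rwa [mul_comm] at this
  set a : ℤ := ⌊α * (n + 1)⌋ with ha
  set θ : ℝ := α * (n + 1) - a with hθ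
  have haR : (a : ℝ) = α * (n+1) - θ := by rw [hθ]; ring
  have hθ0 : 0 < θ := by
    have h1 : (a:ℝ) ≤ α * (n+1) := Int.floor_le _
    have h2 : (a:ℝ) ≠ α * (n+1) := fun h => hirr1 (h ▸ ⟨(a:ℚ), by push_cast; rfl⟩)
    rw [hθ]; rcases lt_or_eq_of_le h1 with h | h
    · linarith
    · exact absurd h h2
  have hθ1 : θ < 1 := by
    have := Int.lt_floor_add_one (α * (n+1))
    rw [hθ]; push_cast at this ⊢; linarith
  have hθα : θ ≠ α := by
    intro h
    apply hirrn
    have heq : α * n = (a : ℝ) := by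
      have h2 : α * (n+1) = θ + a := by rw [hθ]; ring
      rw [h] at h2; nlinarith [h2]
    exact ⟨(a:ℚ), by push_cast; rw [heq]⟩
  rcases lt_or_gt_of_ne hθα with hc | hc
  · -- θ < α : m = a - 1
    have hm : ⌊α * n⌋ = a - 1 := by
      rw [Int.floor_eq_iff]
      refine ⟨by push_cast; nlinarith, by push_cast; nlinarith⟩
    rw [hm, Int.floor_eq_iff]
    push_cast
    refine ⟨by nlinarith, by nlinarith⟩
  · -- θ > α : m = a
    have hm : ⌊α * n⌋ = a := by
      rw [Int.floor_eq_iff]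
      refine ⟨by push_cast; nlinarith, by push_cast; nlinarith⟩
    rw [hm, Int.floor_eq_iff]
    push_cast
    refine ⟨by nlinarith, by nlinarith⟩

/-- Hofstadter's G sequence satisfies g(n) = ⌊α(n+1)⌋ with α = (√5-1)/2. -/
theorem hofstadter_G_floor (g : ℕ → ℕ)
    (h0 : g 0 = 0)
    (hrec : ∀ n, 1 ≤ n → g n = n - g (g (n - 1))) :
    ∀ n : ℕ, (g n : ℤ) = ⌊(Real.sqrt 5 - 1) / 2 * (n + 1)⌋ := by
  set α : ℝ := (Real.sqrt 5 - 1) / 2 with hα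
  have h5 : (Real.sqrt 5)^2 = 5 := Real.sq_sqrt (by norm_num)
  have hs2 : 2 < Real.sqrt 5 := by nlinarith [Real.sqrt_nonneg 5]
  have hs3 : Real.sqrt 5 < 3 := by nlinarith [Real.sqrt_nonneg 5]
  have hα0 : 0 < α := by rw [hα]; linarith
  have hα1 : α < 1 := by rw [hα]; linarith
  set f : ℕ → ℕ := fun n => (⌊α * (n + 1)⌋).toNat with hf
  have hfZ : ∀ n : ℕ, (f n : ℤ) = ⌊α * (n + 1)⌋ := by
    intro n
    rw [hf]
    simp only
    rw [Int.toNat_of_nonneg]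
    positivity
  have hfle : ∀ n : ℕ, f n ≤ n := by
    intro n
    have h1 : ⌊α * ((n:ℝ) + 1)⌋ < (n:ℤ) + 1 := by
      apply Int.floor_lt.mpr
      push_cast
      nlinarith [Nat.cast_nonneg (α := ℝ) n]
    have h2 := hfZ n
    omega
  have main : ∀ n : ℕ, g n = f n := by
    intro n
    induction n using Nat.strong_induction_on with
    | _ n ih =>
      rcases Nat.eq_zero_or_pos n with rfl | hn
      · rw [h0, hf]
        simp only
        have : ⌊α * ((0:ℕ) + 1)⌋ = 0 := by
          rw [Int.floor_eq_iff]
          push_cast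
          constructor <;> nlinarith
        omega
      · have h1 : g (n-1) = f (n-1) := ih (n-1) (by omega)
        have h2 : g (f (n-1)) = f (f (n-1)) := ih (f (n-1)) (by have := hfle (n-1); omega)
        have h3 : g n = n - f (f (n-1)) := by rw [hrec n hn, h1, h2]
        -- key identity
        have hk := hof_key n hn
        rw [← hα] at hk
        have e1 : (f (n-1) : ℤ) = ⌊α * n⌋ := by
          rw [hfZ (n-1)]
          congr 2
          push_cast [Nat.cast_sub hn]
          ring
        have e2 : (f (f (n-1)) : ℤ) = n - (f n : ℤ) := by
          rw [hfZ (f (n-1)), hfZ n]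
          rw [← hk]
          congr 2
          rw [← e1]
          push_cast
          ring
        have h4 : f (f (n-1)) ≤ n := by
          have := hfle (f (n-1)); have := hfle (n-1); omega
        omega
  intro n
  rw [main n, hfZ n]
end

section
/- The sequence g defined by g(0)=0 and g(n)=n-g(g(n-1)) for n≥1 is slow-growing: for all n≥1, g(n) - g(n-1) ∈ {0,1}, and g is monotone increasing. -/
/-- Hofstadter's G sequence is slow-growing: successive differences are 0 or 1,
and g is monotone increasing. -/
theorem hofstadter_G_slow (g : ℕ → ℕ)
    (h0 : g 0 = 0)
    (hle : ∀ m : ℕ, g m ≤ m)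
    (hrec : ∀ n, 1 ≤ n → g n = n - g (g (n - 1))) :
    (∀ n, 1 ≤ n → g n = g (n - 1) ∨ g n = g (n - 1) + 1) ∧ Monotone g := by
  have key : ∀ n, g (n+1) = g n ∨ g (n+1) = g n + 1 := by
    intro n
    induction n using Nat.strong_induction_on with
    | _ n ih =>
      cases n with
      | zero =>
        right
        have h1 := hrec 1 le_rfl
        simp [h0] at h1
        simp [h0, h1]
      | succ k =>
        have h1 := hrec (k+1) (by omega)
        have h2 := hrec (k+2) (by omega)
        rw [show k+2-1 = k+1 from rfl] at h2
        rw [show k+1-1 = k from rfl] at h1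
        show g (k+2) = g (k+1) ∨ g (k+2) = g (k+1) + 1
        have hgk : g k ≤ k := hle k
        have hg : g (g k) ≤ k := (hle _).trans hgk
        rcases ih k (by omega) with h | h
        · rw [h] at h2
          right; omega
        · rw [h] at h2
          have ih2 := ih (g k) (by omega)
          have hg2 : g (g k + 1) ≤ g k + 1 := hle _
          rcases ih2 with h3 | h3
          · right; omega
          · left; omega
  constructor
  · intro n hn
    have := key (n-1)
    have hn1 : n - 1 + 1 = n := by omega
    rw [hn1] at this
    exact this
  · apply monotone_nat_of_le_succ
    intro n
    rcases key n with h | h <;> omega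
end

section
/- For every n ≥ 0, the sequence a defined by a(n)=0 for n<2 and a(n) = n - 1 - a(n-1) - a(a(n-2)) for n ≥ 2 satisfies a(n) = ⌊(√2 - 1)(n+1)⌋. -/
noncomputable def stbAl : ℝ := Real.sqrt 2 - 1

lemma stbAl_def : stbAl = Real.sqrt 2 - 1 := rfl

lemma stbAl_irr : Irrational stbAl := by
  simpa [stbAl] using irrational_sqrt_two.sub_intCast 1

lemma stbAl_mul_nat_irr (n : ℕ) (hn : n ≠ 0) : Irrational (stbAl * n) :=
  stbAl_irr.mul_natCast hn

lemma stb_s_sq : Real.sqrt 2 ^ 2 = 2 := Real.sq_sqrt (by norm_num)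
lemma stb_s_lb : (1.4 : ℝ) < Real.sqrt 2 := by
  nlinarith [Real.sqrt_nonneg 2, stb_s_sq]
lemma stb_s_ub : Real.sqrt 2 < 1.5 := by
  nlinarith [Real.sqrt_nonneg 2, stb_s_sq]

lemma stbAl_sq : stbAl ^ 2 = 1 - 2 * stbAl := by
  have := stb_s_sq; unfold stbAl; nlinarith

lemma stbAl_pos : (0:ℝ) < stbAl := by have := stb_s_lb; unfold stbAl; linarith
lemma stbAl_lt : stbAl < 1/2 := by have := stb_s_ub; unfold stbAl; linarith

/-- The key floor identity. -/
lemma stb_key (k : ℕ) :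
    ⌊stbAl * ((k:ℝ) + 3)⌋ + ⌊stbAl * ((k:ℝ) + 2)⌋
      + ⌊stbAl * ((⌊stbAl * ((k:ℝ) + 1)⌋ : ℝ) + 1)⌋ = (k:ℤ) + 1 := by
  have hal2 := stbAl_sq
  have halp := stbAl_pos
  have hall := stbAl_lt
  set m : ℤ := ⌊stbAl * ((k:ℝ) + 1)⌋ with hm
  set θ : ℝ := stbAl * ((k:ℝ) + 1) - m with hθ
  have hθ0 : 0 ≤ θ := by
    have := Int.floor_le (stbAl * ((k:ℝ) + 1)); rw [hθ]; linarith
  have hθ1 : θ < 1 := by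
    have := Int.lt_floor_add_one (stbAl * ((k:ℝ) + 1)); rw [hθ]; linarith
  have hirr : ∀ j : ℕ, j ≠ 0 → ∀ z : ℤ, stbAl * (j:ℝ) ≠ (z:ℝ) :=
    fun j hj z => (stbAl_mul_nat_irr j hj).ne_int z
  have hθ0' : 0 < θ := by
    rcases lt_or_eq_of_le hθ0 with h | h
    · exact h
    · exfalso; apply hirr (k+1) (by omega) m; push_cast; rw [hθ] at h; linarith
  have hne1 : θ ≠ 1 - stbAl := by
    intro h; apply hirr (k+2) (by omega) (m+1)
    push_cast; rw [hθ] at h; linarith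
  have hne2 : θ ≠ 1 - 2 * stbAl := by
    intro h; apply hirr (k+3) (by omega) (m+1)
    push_cast; rw [hθ] at h; linarith
  -- rewrite the three floors
  have e1 : stbAl * ((k:ℝ) + 2) = (θ + stbAl) + (m : ℝ) := by rw [hθ]; ring
  have e2 : stbAl * ((k:ℝ) + 3) = (θ + 2 * stbAl) + (m : ℝ) := by rw [hθ]; ring
  have e3 : stbAl * ((m : ℝ) + 1)
      = (stbAl - (2 + stbAl) * θ) + (((k:ℤ) + 1 - 2 * m : ℤ) : ℝ) := by
    have hmr : (m : ℝ) = stbAl * ((k:ℝ) + 1) - θ := by rw [hθ]; ring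
    push_cast
    rw [hmr]
    linear_combination ((k:ℝ) + 1) * hal2
  rw [e1, e2, e3, Int.floor_add_intCast, Int.floor_add_intCast, Int.floor_add_intCast]
  have key0 : ⌊θ + 2 * stbAl⌋ + ⌊θ + stbAl⌋ + ⌊stbAl - (2 + stbAl) * θ⌋ = 0 := by
    rcases lt_trichotomy θ (1 - 2 * stbAl) with h | h | h
    · have f1 : ⌊θ + 2 * stbAl⌋ = 0 := by
        rw [Int.floor_eq_iff]; constructor <;> push_cast <;> linarith
      have f2 : ⌊θ + stbAl⌋ = 0 := by
        rw [Int.floor_eq_iff]; constructor <;> push_cast <;> linarith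
      have f3 : ⌊stbAl - (2 + stbAl) * θ⌋ = 0 := by
        rw [Int.floor_eq_iff]; constructor <;> push_cast <;>
          nlinarith [mul_pos (by linarith : (0:ℝ) < 2 + stbAl)
            (by linarith : (0:ℝ) < 1 - 2 * stbAl - θ),
            mul_pos (by linarith : (0:ℝ) < 2 + stbAl) hθ0']
      omega
    · exact absurd h hne2
    · rcases lt_trichotomy θ (1 - stbAl) with h' | h' | h'
      · have f1 : ⌊θ + 2 * stbAl⌋ = 1 := by
          rw [Int.floor_eq_iff]; constructor <;> push_cast <;> linarith
        have f2 : ⌊θ + stbAl⌋ = 0 := by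
          rw [Int.floor_eq_iff]; constructor <;> push_cast <;> linarith
        have f3 : ⌊stbAl - (2 + stbAl) * θ⌋ = -1 := by
          rw [Int.floor_eq_iff]; constructor <;> push_cast <;>
            nlinarith [mul_pos (by linarith : (0:ℝ) < 2 + stbAl)
              (by linarith : (0:ℝ) < 1 - stbAl - θ),
              mul_pos (by linarith : (0:ℝ) < 2 + stbAl)
              (by linarith : (0:ℝ) < θ - (1 - 2 * stbAl))]
        omega
      · exact absurd h' hne1
      · have f1 : ⌊θ + 2 * stbAl⌋ = 1 := by
          rw [Int.floor_eq_iff]; constructor <;> push_cast <;> linarith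
        have f2 : ⌊θ + stbAl⌋ = 1 := by
          rw [Int.floor_eq_iff]; constructor <;> push_cast <;> linarith
        have f3 : ⌊stbAl - (2 + stbAl) * θ⌋ = -2 := by
          rw [Int.floor_eq_iff]; constructor <;> push_cast <;>
            nlinarith [mul_pos (by linarith : (0:ℝ) < 2 + stbAl)
              (by linarith : (0:ℝ) < 1 - θ),
              mul_pos (by linarith : (0:ℝ) < 2 + stbAl)
              (by linarith : (0:ℝ) < θ - (1 - stbAl))]
        omega
  omega

/-- The recurrence a(n) = n - 1 - a(n-1) - a(a(n-2)) with a(0)=a(1)=0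
satisfies a(n) = ⌊(√2-1)(n+1)⌋. -/
theorem sqrt_two_beatty (a : ℕ → ℕ)
    (h0 : a 0 = 0) (h1 : a 1 = 0)
    (hrec : ∀ n, 2 ≤ n →
      (a n : ℤ) = n - 1 - a (n - 1) - a (a (n - 2))) :
    ∀ n : ℕ, (a n : ℤ) = ⌊(Real.sqrt 2 - 1) * (n + 1)⌋ := by
  have halp := stbAl_pos
  have hall := stbAl_lt
  intro n
  induction n using Nat.strong_induction_on with
  | _ n ih =>
    match n with
    | 0 =>
      have h : ⌊(Real.sqrt 2 - 1) * (((0:ℕ):ℝ) + 1)⌋ = 0 := by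
        rw [← stbAl_def, Int.floor_eq_iff]
        constructor <;> push_cast <;> nlinarith
      rw [h, h0]; rfl
    | 1 =>
      have h : ⌊(Real.sqrt 2 - 1) * (((1:ℕ):ℝ) + 1)⌋ = 0 := by
        rw [← stbAl_def, Int.floor_eq_iff]
        constructor <;> push_cast <;> nlinarith
      rw [h, h1]; rfl
    | (k + 2) =>
      have e1 : (a k : ℤ) = ⌊stbAl * ((k:ℝ) + 1)⌋ := by
        rw [ih k (by omega), ← stbAl_def]
      have e2 : (a (k+1) : ℤ) = ⌊stbAl * ((k:ℝ) + 2)⌋ := by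
        rw [ih (k+1) (by omega)]; congr 1; rw [stbAl_def]; push_cast; ring
      have hak : a k ≤ k := by
        have hfl : ⌊stbAl * ((k:ℝ) + 1)⌋ < (k:ℤ) + 1 := by
          rw [Int.floor_lt]
          push_cast
          nlinarith [Nat.cast_nonneg (α := ℝ) k]
        have : (a k : ℤ) ≤ (k : ℤ) := by rw [e1]; omega
        exact_mod_cast this
      have e3 : (a (a k) : ℤ) = ⌊stbAl * ((⌊stbAl * ((k:ℝ) + 1)⌋ : ℝ) + 1)⌋ := by
        rw [ih (a k) (by omega)]
        have hcast : ((a k : ℕ) : ℝ) = ((⌊stbAl * ((k:ℝ) + 1)⌋ : ℤ) : ℝ) := by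
          exact_mod_cast e1
        rw [hcast, stbAl_def]
      have hr := hrec (k+2) (by omega)
      simp only [Nat.add_sub_cancel, show k + 2 - 1 = k + 1 from rfl,
        show k + 2 - 2 = k from rfl] at hr
      have hkey := stb_key k
      have goalcast : ⌊(Real.sqrt 2 - 1) * ((k:ℝ) + 2 + 1)⌋ = ⌊stbAl * ((k:ℝ) + 3)⌋ := by
        rw [stbAl_def]; ring_nf
      rw [hr, e2, e3]
      push_cast
      rw [goalcast]
      linarith [hkey]
end

section
/- Let k ≥ 1 and let α = (√(k²+4) - k)/2 (the irrational with continued fraction [0;k,k,k,...]). Define a(n)=0 for n<k and, for n≥k, a(n) = n - k + 1 - (a(n-1)+a(n-2)+...+a(n-k+1)) - a(a(n-k)). Then for all n ≥ 0, a(n) = ⌊α(n+1)⌋. -/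
section aux
variable {α : ℝ}

lemma alpha_lt_one {k : ℕ} (hk : 1 ≤ k) (hpos : 0 < α) (heq : α^2 + k*α = 1) : α < 1 := by
  by_contra h
  push_neg at h
  nlinarith [(show (1:ℝ) ≤ k by exact_mod_cast hk)]

/-- Key floor identity. -/
lemma key {k : ℕ} (hk : 1 ≤ k) (hα : Irrational α) (hpos : 0 < α) (heq : α^2 + k*α = 1)
    (m : ℕ) (hm : 1 ≤ m) :
    (∑ j ∈ Finset.Ico 1 (k+1), ⌊α * ((m:ℝ) + j)⌋)
      = (m:ℤ) - ⌊α * ((⌊α*(m:ℝ)⌋:ℝ) + 1)⌋ := by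
  have hlt1 : α < 1 := alpha_lt_one hk hpos heq
  set f : ℤ := ⌊α*(m:ℝ)⌋ with hf
  set g : ℤ := ⌊α * ((f:ℝ) + 1)⌋ with hg
  set t : ℝ := α*(m:ℝ) - f with ht
  have hfnn : 0 ≤ f := Int.floor_nonneg.2 (by positivity)
  -- t ∈ (0,1)
  have hirr_m : Irrational (α * (m:ℝ)) := hα.mul_natCast (by omega)
  have ht1 : t < 1 := by
    have := Int.sub_one_lt_floor (α*(m:ℝ)); simp [ht]; linarith [Int.lt_floor_add_one (α*(m:ℝ))]
  have ht0 : 0 < t := by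
    have hne : α*(m:ℝ) ≠ (f:ℝ) := hirr_m.ne_int f
    have := Int.floor_le (α*(m:ℝ))
    rcases lt_or_eq_of_le this with h | h
    · simp [ht]; linarith
    · exact absurd h.symm hne
  -- irrationality of α*(f+1)
  have hirr_g : Irrational (α * ((f:ℝ)+1)) := by
    have : ((f+1:ℤ):ℝ) = (f:ℝ)+1 := by push_cast; ring
    rw [← this]
    exact hα.mul_intCast (by omega)
  set q : ℤ := (k:ℤ) - m + k*f + g with hq
  -- real identity: 1 - t = α*(k - m + k*f) + α^2*(f+1)
  have hreal : 1 - t = α*((k:ℝ) - m + k*f) + α^2*((f:ℝ)+1) := by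
    rw [ht]
    linear_combination (-(1:ℝ) - (f:ℝ)) * heq
  -- characterization: for j : ℤ, t + j*α < 1 ↔ j ≤ q
  have hchar : ∀ j : ℤ, (t + (j:ℝ)*α < 1 ↔ j ≤ q) := by
    intro j
    have h1 : t + (j:ℝ)*α < 1 ↔ (j:ℝ)*α < α*((k:ℝ) - m + k*f) + α^2*((f:ℝ)+1) := by
      constructor <;> intro h <;> linarith
    have h2 : ((j:ℝ)*α < α*((k:ℝ) - m + k*f) + α^2*((f:ℝ)+1)) ↔
        ((j:ℝ) < ((k:ℝ) - m + k*f) + α*((f:ℝ)+1)) := by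
      rw [show α*((k:ℝ) - m + k*f) + α^2*((f:ℝ)+1) = α * (((k:ℝ) - m + k*f) + α*((f:ℝ)+1)) by ring,
        show (j:ℝ)*α = α * (j:ℝ) by ring]
      exact mul_lt_mul_iff_right₀ hpos
    have h3 : ((j:ℝ) < ((k:ℝ) - m + k*f) + α*((f:ℝ)+1)) ↔
        ((j - ((k:ℤ) - m + k*f) : ℤ) : ℝ) < α*((f:ℝ)+1) := by
      push_cast; constructor <;> intro h <;> linarith
    have h4 : (((j - ((k:ℤ) - m + k*f) : ℤ) : ℝ) < α*((f:ℝ)+1)) ↔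
        (j - ((k:ℤ) - m + k*f) ≤ g) := by
      rw [hg]
      constructor
      · intro h
        exact Int.le_floor.2 (le_of_lt h)
      · intro h
        have := Int.le_floor.1 h
        rcases lt_or_eq_of_le this with h' | h'
        · exact h'
        · exact absurd h'.symm (hirr_g.ne_int _)
    rw [h1, h2, h3, h4, hq]; omega
  -- q bounds
  have hq0 : 0 ≤ q := by
    have := (hchar 0).1 (by push_cast; linarith)
    omega
  have hqk : q ≤ k := by
    by_contra h
    push_neg at h
    have := (hchar (k+1)).2 (by omega)
    have hka : α*(k:ℝ) = 1 - α^2 := by linarith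
    push_cast at this
    nlinarith
  -- each floor term
  have hterm : ∀ j ∈ Finset.Ico 1 (k+1),
      ⌊α * ((m:ℝ) + j)⌋ = f + (if (j:ℤ) ≤ q then 0 else 1) := by
    intro j hj
    simp only [Finset.mem_Ico] at hj
    have hja : (j:ℝ)*α ≤ (k:ℝ)*α := by
      apply mul_le_mul_of_nonneg_right _ hpos.le
      exact_mod_cast Nat.lt_succ_iff.1 hj.2
    have hka : (k:ℝ)*α < 1 := by nlinarith
    have hjpos : 0 < (j:ℝ)*α := by
      have : (1:ℝ) ≤ j := by exact_mod_cast hj.1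
      nlinarith
    have hsplit : α * ((m:ℝ) + j) = (f:ℝ) + (t + (j:ℝ)*α) := by
      rw [ht]; ring
    rw [hsplit, Int.floor_intCast_add]
    congr 1
    by_cases hle : ((j:ℕ):ℤ) ≤ q
    · rw [if_pos hle]
      have := (hchar j).2 hle
      exact Int.floor_eq_zero_iff.2 ⟨by positivity, by push_cast at this ⊢; linarith⟩
    · rw [if_neg hle]
      have h1 : ¬ (t + (j:ℝ)*α < 1) := fun h => hle ((hchar j).1 (by push_cast; push_cast at h; linarith))
      push_neg at h1
      have h2 : t + (j:ℝ)*α < 2 := by linarith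
      have : ⌊t + (j:ℝ)*α⌋ = 1 := by
        apply Int.floor_eq_iff.2
        constructor <;> push_cast <;> linarith
      exact this
  rw [Finset.sum_congr rfl hterm, Finset.sum_add_distrib, Finset.sum_const]
  have hcard : (Finset.Ico 1 (k+1)).card = k := by simp
  rw [hcard]
  -- indicator sum = k - q
  have hindsum : (∑ j ∈ Finset.Ico 1 (k+1), (if (j:ℤ) ≤ q then (0:ℤ) else 1)) = (k:ℤ) - q := by
    set qn := q.toNat with hqn
    have hqcast : (qn:ℤ) = q := Int.toNat_of_nonneg hq0
    have hqnk : qn ≤ k := by omega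
    rw [← Finset.sum_Ico_consecutive _ (show 1 ≤ qn+1 by omega) (show qn+1 ≤ k+1 by omega)]
    have h1 : (∑ j ∈ Finset.Ico 1 (qn+1), (if (j:ℤ) ≤ q then (0:ℤ) else 1)) = 0 := by
      apply Finset.sum_eq_zero
      intro j hj
      simp only [Finset.mem_Ico] at hj
      have : (j:ℤ) ≤ q := by omega
      simp [this]
    have h2 : (∑ j ∈ Finset.Ico (qn+1) (k+1), (if (j:ℤ) ≤ q then (0:ℤ) else 1)) = (k:ℤ) - q := by
      have hc : ∀ j ∈ Finset.Ico (qn+1) (k+1), (if (j:ℤ) ≤ q then (0:ℤ) else 1) = 1 := by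
        intro j hj
        simp only [Finset.mem_Ico] at hj
        have : ¬((j:ℤ) ≤ q) := by omega
        simp [this]
      rw [Finset.sum_congr rfl hc, Finset.sum_const, Nat.card_Ico, nsmul_eq_mul, mul_one]
      push_cast
      omega
    rw [h1, h2]; ring
  rw [hindsum, hq]; push_cast; ring

end aux

/-- Beatty sequence corollary: for α = [0;k,k,k,...] = (√(k²+4)-k)/2, the morphic
recurrence a(n) = n-k+1 - Σ_{i=1}^{k-1} a(n-i) - a(a(n-k)) with a(n)=0 for n<k
satisfies a(n) = ⌊α(n+1)⌋. -/
theorem beatty_morphic (k : ℕ) (hk : 1 ≤ k) (a : ℕ → ℕ)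
    (h0 : ∀ n, n < k → a n = 0)
    (hrec : ∀ n, k ≤ n →
      (a n : ℤ) = n - k + 1 - (∑ i ∈ Finset.Ico 1 k, (a (n - i) : ℤ))
        - a (a (n - k))) :
    ∀ n : ℕ, (a n : ℤ) = ⌊(Real.sqrt ((k : ℝ) ^ 2 + 4) - k) / 2 * (n + 1)⌋ := by
  have hs0 : (0:ℝ) ≤ (k:ℝ)^2 + 4 := by positivity
  set s : ℝ := Real.sqrt ((k:ℝ)^2 + 4) with hsdef
  have hs : s^2 = (k:ℝ)^2 + 4 := Real.sq_sqrt hs0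
  set α : ℝ := (s - k)/2 with hαdef
  have heq : α^2 + k*α = 1 := by
    rw [hαdef]; linear_combination hs / 4
  have hks : (k:ℝ) < s := by
    nlinarith [Real.sqrt_nonneg ((k:ℝ)^2 + 4)]
  have hpos : 0 < α := by rw [hαdef]; linarith
  have hlt1 : α < 1 := alpha_lt_one hk hpos heq
  have hirr : Irrational α := by
    have hnsq : ¬ IsSquare (k^2 + 4) := by
      rintro ⟨r, hr⟩
      have h1 : k < r := by nlinarith
      have h2 : r ≤ k + 1 := by
        by_contra h
        push_neg at h
        have h3 : (k+2)*(k+2) ≤ r*r := Nat.mul_le_mul h h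
        nlinarith
      have h3 : r = k + 1 := by omega
      subst h3
      have : 2*k + 1 = 4 := by nlinarith
      omega
    have h1 : Irrational s := by
      have hcast : (((k^2+4:ℕ)):ℝ) = (k:ℝ)^2 + 4 := by push_cast; ring
      rw [hsdef, ← hcast]
      exact irrational_sqrt_natCast_iff.2 hnsq
    have h2 := (h1.sub_natCast k).div_natCast (m := 2) (by norm_num)
    rw [hαdef]
    simpa using h2
  intro n
  induction n using Nat.strong_induction_on with
  | _ n ih =>
    by_cases hn : n < k
    · rw [h0 n hn, Nat.cast_zero]
      symm
      have hkn : ((n:ℝ)+1) ≤ (k:ℝ) := by exact_mod_cast hn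
      have h1 : α * ((n:ℝ)+1) < 1 := by nlinarith
      exact Int.floor_eq_zero_iff.2 ⟨by positivity, h1⟩
    · push_neg at hn
      set m : ℕ := n - k + 1 with hmdef
      have hm1 : 1 ≤ m := by omega
      have hK := key hk hirr hpos heq m hm1
      set f : ℤ := ⌊α*(m:ℝ)⌋ with hf
      -- a (n-k) = f
      have hcast1 : ((n-k:ℕ):ℝ) + 1 = (m:ℝ) := by
        have : (n - k) + 1 = m := by omega
        exact_mod_cast congrArg (Nat.cast : ℕ → ℝ) this
      have hank : (a (n-k) : ℤ) = f := by
        rw [ih (n-k) (by omega), hcast1]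
      have hflt : f < (m:ℤ) := by
        rw [hf]
        apply Int.floor_lt.2
        have hmr : (1:ℝ) ≤ (m:ℝ) := by exact_mod_cast hm1
        push_cast
        nlinarith
      have hankn : a (n-k) < n := by
        have h1 : (a (n-k):ℤ) < (n:ℤ) := by
          rw [hank]
          have : (m:ℤ) ≤ (n:ℤ) := by omega
          omega
        exact_mod_cast h1
      have haa : (a (a (n-k)) : ℤ) = ⌊α*((f:ℝ)+1)⌋ := by
        have h1 := ih _ hankn
        have hcastf : ((a (n-k):ℕ):ℝ) = (f:ℝ) := by exact_mod_cast hank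
        rw [hcastf] at h1
        exact h1
      have hsum : (∑ i ∈ Finset.Ico 1 k, (a (n - i) : ℤ))
          = ∑ j ∈ Finset.Ico 1 k, ⌊α*((m:ℝ) + (j:ℝ))⌋ := by
        have step1 : ∀ i ∈ Finset.Ico 1 k, (a (n-i):ℤ) = ⌊α*((m:ℝ) + ((k-i:ℕ):ℝ))⌋ := by
          intro i hi
          simp only [Finset.mem_Ico] at hi
          rw [ih _ (by omega : n - i < n)]
          congr 1
          have hnat : (n-i) + 1 = m + (k-i) := by omega
          have hc : ((n-i:ℕ):ℝ) + 1 = (m:ℝ) + ((k-i:ℕ):ℝ) := by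
            exact_mod_cast congrArg (Nat.cast : ℕ → ℝ) hnat
          rw [hc]
        rw [Finset.sum_congr rfl step1]
        apply Finset.sum_nbij' (i := fun i => k - i) (j := fun i => k - i)
        · intro x hx; simp only [Finset.mem_Ico] at *; omega
        · intro x hx; simp only [Finset.mem_Ico] at *; omega
        · intro x hx; simp only [Finset.mem_Ico] at hx; omega
        · intro x hx; simp only [Finset.mem_Ico] at hx; omega
        · intro x hx; rfl
      have hsplit : (∑ j ∈ Finset.Ico 1 (k+1), ⌊α * ((m:ℝ) + j)⌋)
          = (∑ j ∈ Finset.Ico 1 k, ⌊α * ((m:ℝ) + j)⌋) + ⌊α * ((m:ℝ) + k)⌋ :=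
        Finset.sum_Ico_succ_top hk _
      have hmk : (m:ℝ) + k = (n:ℝ) + 1 := by
        have hnat : m + k = n + 1 := by omega
        exact_mod_cast congrArg (Nat.cast : ℕ → ℝ) hnat
      rw [hsplit, hmk] at hK
      have hmz : (m:ℤ) = (n:ℤ) - k + 1 := by omega
      rw [hrec n hn, hsum, haa]
      linarith [hK]
end

section
/- Let σ be the morphism on the alphabet {r,0,1} given by r → r0^{k-1}, 0 → 10^{k-1}, 1 → 10^k, and let γ be the morphism on {0,1} given by 0 → 0^{k-1}1, 1 → 0^{k-1}10. Then for every finite word W over {0,1}, γ(W) · 0^{k-1} = 0^{k-1} · σ(W). -/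
/-- For σ : 0 → 10^{k-1}, 1 → 10^k and γ : 0 → 0^{k-1}1, 1 → 0^{k-1}10,
one has γ(W)·0^{k-1} = 0^{k-1}·σ(W) for every finite binary word W. -/
theorem gamma_sigma_conjugate (k : ℕ) (hk : 1 ≤ k)
    (σ γ : Fin 2 → List (Fin 2))
    (hσ0 : σ 0 = 1 :: List.replicate (k - 1) 0)
    (hσ1 : σ 1 = 1 :: List.replicate k 0)
    (hγ0 : γ 0 = List.replicate (k - 1) 0 ++ [1])
    (hγ1 : γ 1 = List.replicate (k - 1) 0 ++ [1, 0]) :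
    ∀ W : List (Fin 2),
      W.flatMap γ ++ List.replicate (k - 1) 0
        = List.replicate (k - 1) 0 ++ W.flatMap σ := by
  have key : ∀ a : Fin 2, γ a ++ List.replicate (k - 1) 0
      = List.replicate (k - 1) 0 ++ σ a := by
    intro a
    fin_cases a
    · simp [hγ0, hσ0]
    · simp [hγ1, hσ1]
      rw [show k = (k-1) + 1 by omega, List.replicate_succ]
      simp
  intro W
  induction W with
  | nil => simp
  | cons a W ih =>
      simp only [List.flatMap_cons, List.append_assoc, ih]
      rw [← List.append_assoc, key, List.append_assoc]
end

section
/- With σ as above and L_n := σ^n([0]^s), for all n ≥ 1 one has |L_{n+1}|_{[0]} = Σ_{i=0}^{n} r_{i+1}·|L_{n-i}|_{[0]}. -/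
private lemma count_sigma_zero (r : ℕ → ℕ) (W : List ℕ) :
    ((W.flatMap (fun j => (j + 1) :: List.replicate (r (j + 1)) 0)).count 0)
      = (W.map (fun j => r (j + 1))).sum := by
  induction W with
  | nil => simp
  | cons a W ih =>
    simp [List.flatMap_cons, List.count_append, List.count_cons,
      List.count_replicate, ih]

private lemma count_sigma_succ (r : ℕ → ℕ) (k : ℕ) (W : List ℕ) :
    ((W.flatMap (fun j => (j + 1) :: List.replicate (r (j + 1)) 0)).count (k + 1))
      = W.count k := by
  induction W with
  | nil => simp
  | cons a W ih =>
    simp [List.flatMap_cons, List.count_append, List.count_cons,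
      List.count_replicate, ih]

private lemma sum_map_eq_sum_count (f : ℕ → ℕ) (m : ℕ) :
    ∀ W : List ℕ, (∀ j ∈ W, j < m) →
      (W.map f).sum = ∑ k ∈ Finset.range m, W.count k * f k := by
  intro W
  induction W with
  | nil => simp
  | cons a W ih =>
    intro h
    have ha : a < m := h a (by simp)
    have hW : ∀ j ∈ W, j < m := fun j hj => h j (by simp [hj])
    simp only [List.map_cons, List.sum_cons, ih hW, List.count_cons, beq_iff_eq]
    have : ∀ k, (W.count k + if a = k then 1 else 0) * f k
        = W.count k * f k + (if a = k then f k else 0) := by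
      intro k; split <;> ring
    simp only [this, Finset.sum_add_distrib, Finset.sum_ite_eq,
      Finset.mem_range, ha, if_true]
    ring

private lemma mem_L (r : ℕ → ℕ) (s : ℕ) (σ : List ℕ → List ℕ)
    (hσ : ∀ W : List ℕ,
      σ W = W.flatMap (fun j => (j + 1) :: List.replicate (r (j + 1)) 0)) :
    ∀ n, ∀ j ∈ σ^[n] (List.replicate s 0), j ≤ n := by
  intro n
  induction n with
  | zero => intro j hj; simp [List.eq_of_mem_replicate hj]
  | succ n ih =>
    intro j hj
    rw [Function.iterate_succ_apply', hσ] at hj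
    rcases List.mem_flatMap.mp hj with ⟨a, ha, hj⟩
    rcases List.mem_cons.mp hj with h | h
    · exact h ▸ Nat.succ_le_succ (ih a ha)
    · have := (List.eq_of_mem_replicate h); omega

private lemma count_L (r : ℕ → ℕ) (s : ℕ) (σ : List ℕ → List ℕ)
    (hσ : ∀ W : List ℕ,
      σ W = W.flatMap (fun j => (j + 1) :: List.replicate (r (j + 1)) 0)) :
    ∀ n k, (σ^[n] (List.replicate s 0)).count k
      = if k ≤ n then (σ^[n - k] (List.replicate s 0)).count 0 else 0 := by
  intro n
  induction n with
  | zero =>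
    intro k
    cases k with
    | zero => simp
    | succ k => simp [List.count_replicate]
  | succ n ih =>
    intro k
    cases k with
    | zero => simp
    | succ k =>
      rw [Function.iterate_succ_apply', hσ, count_sigma_succ, ih k]
      have h1 : k + 1 ≤ n + 1 ↔ k ≤ n := by omega
      have h2 : n + 1 - (k + 1) = n - k := by omega
      simp [h1, h2]

/-- With L_n = σ^n([0]^s), for n ≥ 1:
|L_{n+1}|_0 = Σ_{i=0}^n r_{i+1}·|L_{n-i}|_0. -/
theorem zero_count_recurrence (r : ℕ → ℕ) (s : ℕ) (hs : 1 ≤ s)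
    (σ : List ℕ → List ℕ)
    (hσ : ∀ W : List ℕ,
      σ W = W.flatMap (fun j => (j + 1) :: List.replicate (r (j + 1)) 0)) :
    ∀ n, 1 ≤ n →
      (σ^[n + 1] (List.replicate s 0)).count 0
        = ∑ i ∈ Finset.range (n + 1),
            r (i + 1) * (σ^[n - i] (List.replicate s 0)).count 0 := by
  intro n _
  rw [Function.iterate_succ_apply', hσ, count_sigma_zero,
    sum_map_eq_sum_count (fun j => r (j + 1)) (n + 1) _
      (fun j hj => Nat.lt_succ_of_le (mem_L r s σ hσ n j hj))]
  refine Finset.sum_congr rfl (fun k hk => ?_)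
  have hk' : k ≤ n := Nat.lt_succ_iff.mp (Finset.mem_range.mp hk)
  rw [count_L r s σ hσ n k, if_pos hk']
  ring
end

section
/- With σ and L_n as above, define the formal power series N(z) = Σ_{n≥0} |L_n|_{[0]} z^n and R(z) = -1 + Σ_{n≥1} r_n z^n (i.e., r_0 = -1). Then N(z)·R(z) = -s as formal power series. -/
private def sig (r : ℕ → ℕ) (W : List ℕ) : List ℕ :=
  W.flatMap (fun j => (j + 1) :: List.replicate (r (j + 1)) 0)

private lemma count_zero_sig (r : ℕ → ℕ) (W : List ℕ) :
    (sig r W).count 0 = (W.map (fun x => r (x + 1))).sum := by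
  rw [sig, List.count_flatMap]
  congr 1
  ext x
  simp [List.count_cons, List.count_replicate]

private lemma count_succ_sig (r : ℕ → ℕ) (W : List ℕ) (j : ℕ) :
    (sig r W).count (j + 1) = W.count j := by
  rw [sig, List.count_flatMap]
  induction W with
  | nil => simp
  | cons a W ih =>
      have hhead : List.count (j + 1) ((a + 1) :: List.replicate (r (a + 1)) 0)
          = if j = a then 1 else 0 := by
        rw [List.count_cons, List.count_replicate]
        rcases eq_or_ne j a with h | h
        · simp [h]
        · simp [h, h.symm]
      simp only [List.map_cons, List.sum_cons, Function.comp_apply, hhead, ih]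
      rw [List.count_cons]
      by_cases h : j = a <;> simp [h] <;> omega

private lemma mem_iter_le (r : ℕ → ℕ) (s : ℕ) :
    ∀ n x, x ∈ (sig r)^[n] (List.replicate s 0) → x ≤ n := by
  intro n
  induction n with
  | zero => intro x hx; simp at hx; omega
  | succ n ih =>
      intro x hx
      rw [Function.iterate_succ_apply', sig, List.mem_flatMap] at hx
      obtain ⟨a, ha, hx⟩ := hx
      rcases List.mem_cons.1 hx with h | h
      · have := ih a ha; omega
      · have := List.eq_of_mem_replicate h; omega

private lemma count_iter (r : ℕ → ℕ) (s : ℕ) :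
    ∀ j n, j ≤ n → ((sig r)^[n] (List.replicate s 0)).count j
      = ((sig r)^[n - j] (List.replicate s 0)).count 0 := by
  intro j
  induction j with
  | zero => intro n _; rw [Nat.sub_zero]
  | succ j ih =>
      intro n hn
      obtain ⟨m, rfl⟩ : ∃ m, n = m + 1 := ⟨n - 1, by omega⟩
      rw [Nat.succ_sub_succ, Function.iterate_succ_apply', count_succ_sig,
        ih m (by omega)]

private lemma map_sum_eq (f : ℕ → ℕ) :
    ∀ (W : List ℕ) (m : ℕ), (∀ x ∈ W, x < m) →
      (W.map f).sum = ∑ j ∈ Finset.range m, W.count j * f j := by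
  intro W
  induction W with
  | nil => simp
  | cons a W ih =>
      intro m hm
      have ha : a < m := hm a (by simp)
      simp only [List.map_cons, List.sum_cons]
      rw [ih m (fun x hx => hm x (by simp [hx]))]
      have hcount : ∀ j, (a :: W).count j = W.count j + if j = a then 1 else 0 := by
        intro j; rw [List.count_cons]
        rcases eq_or_ne j a with h | h
        · simp [h]
        · simp [h, h.symm]
      simp only [hcount, add_mul, Finset.sum_add_distrib]
      have h2 : ∑ j ∈ Finset.range m, (if j = a then 1 else 0) * f j = f a := by
        rw [Finset.sum_eq_single a]
        · simp
        · intro b _ hb; simp [hb]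
        · intro h; exact absurd (Finset.mem_range.2 ha) h
      rw [h2]; ring

private lemma recurrence (r : ℕ → ℕ) (s : ℕ) (n : ℕ) :
    ((sig r)^[n + 1] (List.replicate s 0)).count 0
      = ∑ i ∈ Finset.range (n + 1),
          ((sig r)^[i] (List.replicate s 0)).count 0 * r (n + 1 - i) := by
  set L := (sig r)^[n] (List.replicate s 0) with hL
  rw [Function.iterate_succ_apply', count_zero_sig,
    map_sum_eq _ L (n + 1) (fun x hx => Nat.lt_succ_of_le (mem_iter_le r s n x hx))]
  rw [← Finset.sum_range_reflect]
  apply Finset.sum_congr rfl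
  intro j hj
  rw [Finset.mem_range] at hj
  have h1 : n + 1 - 1 - j = n - j := by omega
  rw [h1, hL, count_iter r s (n - j) n (by omega)]
  have h2 : n - (n - j) = j := by omega
  have h3 : n - j + 1 = n + 1 - j := by omega
  rw [h2, h3]

/-- Generating function identity N(z)·R(z) = -s, where
N(z) = Σ |L_n|_0 z^n and R(z) = -1 + Σ_{n≥1} r_n z^n. -/
theorem gf_identity (r : ℕ → ℕ) (s : ℕ) (hs : 1 ≤ s)
    (σ : List ℕ → List ℕ)
    (hσ : ∀ W : List ℕ,
      σ W = W.flatMap (fun j => (j + 1) :: List.replicate (r (j + 1)) 0)) :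
    (PowerSeries.mk fun n =>
        ((σ^[n] (List.replicate s 0)).count 0 : ℤ)) *
      (PowerSeries.mk fun n => if n = 0 then (-1 : ℤ) else (r n : ℤ))
      = PowerSeries.C (-(s : ℤ)) := by
  have hσ' : σ = sig r := funext hσ
  subst hσ'
  ext N
  rw [PowerSeries.coeff_mul, Finset.Nat.sum_antidiagonal_eq_sum_range_succ_mk]
  simp only [PowerSeries.coeff_mk]
  rcases Nat.eq_zero_or_pos N with rfl | hN
  · simp
  · obtain ⟨n, rfl⟩ : ∃ n, N = n + 1 := ⟨N - 1, by omega⟩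
    rw [PowerSeries.coeff_C, if_neg (by omega), Finset.sum_range_succ]
    have key := recurrence r s n
    have hsum : ∑ i ∈ Finset.range (n + 1),
        (((sig r)^[i] (List.replicate s 0)).count 0 : ℤ)
          * (if n + 1 - i = 0 then (-1 : ℤ) else (r (n + 1 - i) : ℤ))
        = ∑ i ∈ Finset.range (n + 1),
        (((sig r)^[i] (List.replicate s 0)).count 0 : ℤ) * (r (n + 1 - i) : ℤ) := by
      apply Finset.sum_congr rfl
      intro i hi
      rw [Finset.mem_range] at hi
      rw [if_neg (by omega)]
    have keyZ : ((((sig r)^[n + 1] (List.replicate s 0)).count 0 : ℕ) : ℤ)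
        = ∑ i ∈ Finset.range (n + 1),
            (((sig r)^[i] (List.replicate s 0)).count 0 : ℤ) * (r (n + 1 - i) : ℤ) := by
      rw [key]; push_cast; rfl
    have hlast : (if n + 1 - (n + 1) = 0 then (-1 : ℤ) else (r (n + 1 - (n + 1)) : ℤ))
        = -1 := by simp
    rw [hsum, hlast, keyZ]
    ring
end

section
/- With σ and L_n as above, |L_n| = Σ_{i=0}^{n} |L_i|_{[0]}, i.e., the total length of σ^n([0]^s) equals the sum over i ≤ n of the number of zeros in σ^i([0]^s). -/
lemma sigma_len_aux (r : ℕ → ℕ) (W : List ℕ) :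
    (W.flatMap (fun j => (j + 1) :: List.replicate (r (j + 1)) 0)).length
      = W.length + (W.flatMap (fun j => (j + 1) :: List.replicate (r (j + 1)) 0)).count 0 := by
  induction W with
  | nil => simp
  | cons a t ih =>
    simp only [List.flatMap_cons, List.length_append, List.count_append, List.length_cons,
      List.count_cons, List.length_replicate, List.count_replicate]
    simp only [ih]
    have : (a + 1 : ℕ) ≠ 0 := Nat.succ_ne_zero a
    simp [this]
    ring

/-- With L_n = σ^n([0]^s), the length of L_n equals Σ_{i=0}^n |L_i|_0. -/
theorem length_eq_sum_zero_counts (r : ℕ → ℕ) (s : ℕ) (hs : 1 ≤ s)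
    (σ : List ℕ → List ℕ)
    (hσ : ∀ W : List ℕ,
      σ W = W.flatMap (fun j => (j + 1) :: List.replicate (r (j + 1)) 0)) :
    ∀ n : ℕ, (σ^[n] (List.replicate s 0)).length
      = ∑ i ∈ Finset.range (n + 1), (σ^[i] (List.replicate s 0)).count 0 := by
  intro n
  induction n with
  | zero => simp
  | succ n ih =>
    rw [Finset.sum_range_succ, ← ih, Function.iterate_succ_apply', hσ]
    rw [sigma_len_aux r]
end

section
/- Let a : ℤ → ℤ satisfy a(n) = 0 for n ≤ 0 and a(n) = n - 1 - Σ_{i≥1} a^i(n-i) for n ≥ 1 (where a^i denotes i-fold composition and the sum is finite since a^i(n-i)=0 for i ≥ n). Then a(F_{2n}) = F_{2n-2} for all n ≥ 1. -/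
namespace IT
def f : ℕ → ℕ × ℕ × ℕ × ℕ
  | 0 => (0, 0, 1, 0)
  | 1 => (0, 0, 1, 0)
  | n+2 =>
    let t := f (n+1)
    if n+2 = t.2.2.1 + 1 + t.2.2.2 then
      let a' := t.1 + 1
      let e' := (f (min a' (n+1))).2.1 + 1
      (a', e', n+2, e')
    else (t.1, 0, t.2.2.1, t.2.2.2)
  termination_by n => n
  decreasing_by all_goals omega

def a (n : ℕ) : ℕ := (f n).1
def e (n : ℕ) : ℕ := (f n).2.1
def q (n : ℕ) : ℕ := (f n).2.2.1
def E (n : ℕ) : ℕ := (f n).2.2.2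

lemma fstep (n : ℕ) : f (n+2) =
    if n+2 = q (n+1) + 1 + E (n+1) then
      (a (n+1) + 1, e (min (a (n+1) + 1) (n+1)) + 1, n+2, e (min (a (n+1) + 1) (n+1)) + 1)
    else (a (n+1), 0, q (n+1), E (n+1)) := by
  rw [f]; rfl

lemma f0 : f 0 = (0, 0, 1, 0) := by rw [f]
lemma f1 : f 1 = (0, 0, 1, 0) := by rw [f]
@[simp] lemma a0 : a 0 = 0 := by rw [a, f0]
@[simp] lemma e0 : e 0 = 0 := by rw [e, f0]
@[simp] lemma q0 : q 0 = 1 := by rw [q, f0]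
@[simp] lemma E0 : E 0 = 0 := by rw [E, f0]
@[simp] lemma a1 : a 1 = 0 := by rw [a, f1]
@[simp] lemma e1 : e 1 = 0 := by rw [e, f1]
@[simp] lemma q1 : q 1 = 1 := by rw [q, f1]
@[simp] lemma E1 : E 1 = 0 := by rw [E, f1]

lemma step_true {n : ℕ} (h : n+2 = q (n+1) + 1 + E (n+1)) (h2 : a (n+1) + 1 ≤ n+1) :
    a (n+2) = a (n+1) + 1 ∧ e (n+2) = e (a (n+1) + 1) + 1 ∧ q (n+2) = n+2 ∧
      E (n+2) = e (a (n+1) + 1) + 1 := by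
  have hm : min (a (n+1) + 1) (n+1) = a (n+1) + 1 := min_eq_left h2
  constructor
  · show (f (n+2)).1 = _
    rw [fstep, if_pos h, hm]
  constructor
  · show (f (n+2)).2.1 = _
    rw [fstep, if_pos h, hm]
  constructor
  · show (f (n+2)).2.2.1 = _
    rw [fstep, if_pos h]
  · show (f (n+2)).2.2.2 = _
    rw [fstep, if_pos h, hm]

lemma step_false {n : ℕ} (h : ¬ (n+2 = q (n+1) + 1 + E (n+1))) :
    a (n+2) = a (n+1) ∧ e (n+2) = 0 ∧ q (n+2) = q (n+1) ∧ E (n+2) = E (n+1) := by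
  refine ⟨?_, ?_, ?_, ?_⟩
  · show (f (n+2)).1 = _; rw [fstep, if_neg h]
  · show (f (n+2)).2.1 = _; rw [fstep, if_neg h]
  · show (f (n+2)).2.2.1 = _; rw [fstep, if_neg h]
  · show (f (n+2)).2.2.2 = _; rw [fstep, if_neg h]

def Inv (n : ℕ) : Prop :=
  1 ≤ q n ∧ q n ≤ n ∧ n ≤ q n + E n ∧
  E n = e (q n) ∧
  a (q n) = a n ∧
  a n + 1 ≤ n ∧
  e n ≤ a n ∧
  (2 ≤ n → a n = a (n-1) + (if q n = n then 1 else 0)) ∧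
  (2 ≤ n → 1 ≤ a n) ∧
  (q n = n → 2 ≤ n → e n = e (a n) + 1) ∧
  (q n ≠ n → e n = 0)

lemma inv : ∀ n, 1 ≤ n → Inv n := by
  intro n
  induction n using Nat.strong_induction_on with
  | _ n IH =>
    intro h1
    match n, h1 with
    | 1, _ =>
      refine ⟨by simp, by simp, by simp, by simp, by simp, by simp, by simp,
        by omega, by omega, by intro _ h; omega, by intro h; simp⟩
    | (m+2), _ =>
      have IHm : Inv (m+1) := IH (m+1) (by omega) (by omega)
      obtain ⟨hq1, hqle, hnle, hEe, haq, hale, hea, hstep, hapos, hrs, hnrs⟩ := IHm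
      by_cases hc : m+2 = q (m+1) + 1 + E (m+1)
      · obtain ⟨sa, se, sq, sE⟩ := step_true hc hale
        -- value v := a (m+1) + 1 = a (m+2), 1 ≤ v ≤ m+1
        have hvle : a (m+1) + 1 ≤ m + 1 := hale
        have hInva : Inv (a (m+1) + 1) := IH _ (by omega) (by omega)
        obtain ⟨_, _, _, _, _, hale', hea', _, _, _, _⟩ := hInva
        refine ⟨by omega, by rw [sq], by rw [sq, sE]; omega, by rw [sE, sq, se], ?_, ?_, ?_, ?_, ?_, ?_, ?_⟩
        · rw [sq]
        · omega
        · -- e (m+2) ≤ a (m+2)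
          rw [se, sa]
          -- e (v) + 1 ≤ v where v = a(m+1)+1 : e v ≤ a v, a v + 1 ≤ v  (if v ≥ 1)
          rcases Nat.eq_or_lt_of_le (show 1 ≤ a (m+1) + 1 by omega) with hv1 | hv2
          · rw [← hv1]; simp
          · have : a (a (m+1) + 1) + 1 ≤ a (m+1) + 1 := hale'
            omega
        · intro _; rw [sa, sq, if_pos rfl]; simp
        · intro _; omega
        · intro _ _; rw [se, sa]
        · intro hne; exact absurd sq hne
      · obtain ⟨sa, se, sq, sE⟩ := step_false hc
        refine ⟨by omega, by omega, by omega, by rw [sE, sq]; exact hEe, ?_, by omega, ?_, ?_, ?_, ?_, ?_⟩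
        · rw [sq, sa]; exact haq
        · rw [se]; omega
        · intro _
          rw [sa, sq, if_neg (by omega)]; simp
        · intro _
          rcases Nat.lt_or_ge (m+1) 2 with h2 | h2
          · -- m+1 = 1 : but then cond at m+2=2 must be true: q 1 +1+ E 1 = 2
            have hm0 : m = 0 := by omega
            subst hm0
            exfalso; apply hc; simp
          · rw [sa]; exact hapos h2
        · intro hqn _; exfalso; omega
        · intro _; rw [se]
  termination_by n => n


-- ===== derived basic lemmas =====
lemma q_pos (n : ℕ) (h : 1 ≤ n) : 1 ≤ q n := (inv n h).1
lemma q_le (n : ℕ) (h : 1 ≤ n) : q n ≤ n := (inv n h).2.1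
lemma le_qE (n : ℕ) (h : 1 ≤ n) : n ≤ q n + E n := (inv n h).2.2.1
lemma E_eq (n : ℕ) (h : 1 ≤ n) : E n = e (q n) := (inv n h).2.2.2.1
lemma a_lt (n : ℕ) (h : 1 ≤ n) : a n + 1 ≤ n := (inv n h).2.2.2.2.2.1
lemma e_le_a (n : ℕ) (h : 1 ≤ n) : e n ≤ a n := (inv n h).2.2.2.2.2.2.1
lemma a_step (n : ℕ) (h : 2 ≤ n) :
    a n = a (n-1) + (if q n = n then 1 else 0) :=
  (inv n (by omega)).2.2.2.2.2.2.2.1 h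
lemma a_pos (n : ℕ) (h : 2 ≤ n) : 1 ≤ a n :=
  (inv n (by omega)).2.2.2.2.2.2.2.2.1 h
lemma e_rs (n : ℕ) (h : 2 ≤ n) (hq : q n = n) : e n = e (a n) + 1 :=
  (inv n (by omega)).2.2.2.2.2.2.2.2.2.1 hq h
lemma e_nrs (n : ℕ) (h : 1 ≤ n) (hq : q n ≠ n) : e n = 0 :=
  (inv n h).2.2.2.2.2.2.2.2.2.2 hq

lemma e_zero_one (n : ℕ) (h : n ≤ 1) : e n = 0 := by
  interval_cases n <;> simp

lemma e_pos_iff (n : ℕ) : 1 ≤ e n ↔ (2 ≤ n ∧ q n = n) := by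
  constructor
  · intro he
    rcases Nat.lt_or_ge n 2 with h2 | h2
    · exfalso; have := e_zero_one n (by omega); omega
    · refine ⟨h2, ?_⟩
      by_contra hq
      have := e_nrs n (by omega) hq
      omega
  · rintro ⟨h2, hq⟩
    have := e_rs n h2 hq
    omega

lemma a_succ (n : ℕ) :
    a (n+1) = a n + (if 2 ≤ n + 1 ∧ q (n+1) = n+1 then 1 else 0) := by
  rcases Nat.eq_zero_or_pos n with h0 | h1
  · subst h0; simp
  · have := a_step (n+1) (by omega)
    simp only [Nat.add_sub_cancel] at this
    by_cases hq : q (n+1) = n+1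
    · rw [this, if_pos hq, if_pos ⟨by omega, hq⟩]
    · rw [this, if_neg hq, if_neg (by tauto)]

-- ===== increments of iterates =====
lemma iter_incr : ∀ i, 1 ≤ i → ∀ n : ℕ,
    a^[i] (n+1) = a^[i] n + (if i ≤ e (n+1) then 1 else 0) := by
  intro i hi
  induction i, hi using Nat.le_induction with
  | base =>
    intro n
    simp only [Function.iterate_one]
    rw [a_succ n]
    congr 1
    by_cases h : 1 ≤ e (n+1)
    · rw [if_pos ((e_pos_iff (n+1)).1 h), if_pos h]
    · rw [if_neg (fun hc => h ((e_pos_iff (n+1)).2 hc)), if_neg h]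
  | succ i hi IH =>
    intro n
    rw [Function.iterate_succ_apply, Function.iterate_succ_apply]
    by_cases hrs : 2 ≤ n + 1 ∧ q (n+1) = n+1
    · have ha : a (n+1) = a n + 1 := by rw [a_succ n, if_pos hrs]
      have he : e (n+1) = e (a (n+1)) + 1 := e_rs (n+1) hrs.1 hrs.2
      rw [ha, IH (a n)]
      congr 1
      rw [he, ha]
      by_cases h : i ≤ e (a n + 1) <;> simp [h] <;> omega
    · have ha : a (n+1) = a n := by rw [a_succ n, if_neg hrs]; simp
      have he : e (n+1) = 0 := by
        by_contra h
        exact hrs ((e_pos_iff (n+1)).1 (by omega))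
      rw [ha, he, if_neg (by omega)]
      simp

lemma iter_zero : ∀ i n : ℕ, n ≤ i → a^[i] n = 0 := by
  intro i
  induction i with
  | zero => intro n h; interval_cases n; simp
  | succ i IH =>
    intro n h
    rw [Function.iterate_succ_apply]
    rcases Nat.eq_zero_or_pos n with h0 | h1
    · subst h0; simpa using IH 0 (by omega)
    · exact IH (a n) (by have := a_lt n h1; omega)

-- ===== run structure =====
lemma run_const (n : ℕ) (h : 1 ≤ n) :
    ∀ m, n ≤ m → m ≤ q n + E n → q m = q n ∧ E m = E n ∧ a m = a n := by
  intro m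
  induction m using Nat.strong_induction_on with
  | _ m IH =>
    intro h1 h2
    rcases Nat.eq_or_lt_of_le h1 with rfl | hlt
    · exact ⟨rfl, rfl, rfl⟩
    · -- n < m, so m = m'+1 with n ≤ m'
      obtain ⟨m', rfl⟩ : ∃ m', m = m' + 1 := ⟨m - 1, by omega⟩
      have hm' := IH m' (by omega) (by omega) (by omega)
      -- m'+1 = m''+2 since m' ≥ n ≥ 1
      obtain ⟨m'', rfl⟩ : ∃ m'', m' = m'' + 1 := ⟨m' - 1, by omega⟩
      have hc : ¬ (m'' + 2 = q (m''+1) + 1 + E (m''+1)) := by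
        rw [hm'.1, hm'.2.1]; omega
      obtain ⟨sa, se, sq, sE⟩ := step_false hc
      exact ⟨by rw [sq, hm'.1], by rw [sE, hm'.2.1], by rw [sa, hm'.2.2]⟩

lemma nxt_start (n : ℕ) (h : 1 ≤ n) :
    q (q n + E n + 1) = q n + E n + 1 ∧ a (q n + E n + 1) = a n + 1 := by
  have hrc := run_const n h (q n + E n) (le_qE n h) (le_refl _)
  have hy1 : 1 ≤ q n + E n := by have := q_pos n h; omega
  obtain ⟨y', hy'⟩ : ∃ y', q n + E n = y' + 1 := ⟨q n + E n - 1, by omega⟩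
  rw [hy'] at hrc ⊢
  have hc : y' + 2 = q (y'+1) + 1 + E (y'+1) := by
    rw [hrc.1, hrc.2.1]; omega
  have h2 : a (y'+1) + 1 ≤ y' + 1 := a_lt (y'+1) (by omega)
  obtain ⟨sa, se, sq, sE⟩ := step_true hc h2
  exact ⟨sq, by rw [sa, hrc.2.2]⟩

-- ===== first occurrence positions =====
def ph : ℕ → ℕ
  | 0 => 1
  | v+1 => q (ph v) + E (ph v) + 1

lemma ph_props : ∀ v, 1 ≤ ph v ∧ a (ph v) = v ∧ q (ph v) = ph v := by
  intro v
  induction v with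
  | zero => refine ⟨by simp [ph], by simp [ph], by simp [ph]⟩
  | succ v IH =>
    obtain ⟨h1, h2, h3⟩ := IH
    have := nxt_start (ph v) h1
    refine ⟨by show 1 ≤ q (ph v) + E (ph v) + 1; omega, ?_, ?_⟩
    · show a (q (ph v) + E (ph v) + 1) = v + 1
      rw [this.2, h2]
    · show q (q (ph v) + E (ph v) + 1) = q (ph v) + E (ph v) + 1
      exact this.1

lemma ph_pos (v : ℕ) : 1 ≤ ph v := (ph_props v).1
lemma a_ph (v : ℕ) : a (ph v) = v := (ph_props v).2.1
lemma q_ph (v : ℕ) : q (ph v) = ph v := (ph_props v).2.2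

lemma ph_one : ph 1 = 2 := by simp [ph]

lemma ph_mono_two (v : ℕ) (h : 1 ≤ v) : 2 ≤ ph v := by
  have hav := a_ph v
  have h1 := ph_pos v
  rcases Nat.lt_or_ge (ph v) 2 with h2 | h2
  · exfalso
    have : ph v = 1 := by omega
    rw [this] at hav
    simp at hav
    omega
  · exact h2

lemma ph_succ (v : ℕ) (h : 1 ≤ v) : ph (v+1) = ph v + 2 + e v := by
  show q (ph v) + E (ph v) + 1 = _
  rw [q_ph, E_eq (ph v) (ph_pos v), q_ph]
  have : e (ph v) = e v + 1 := by
    have := e_rs (ph v) (ph_mono_two v h) (q_ph v)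
    rwa [a_ph] at this
  omega

-- ===== counting sums =====
lemma sum_indicator (c N : ℕ) (h : c ≤ N) :
    (∑ i ∈ Finset.Icc 1 N, (if i ≤ c then 1 else 0)) = c := by
  rw [← Finset.sum_filter]
  have hf : (Finset.Icc 1 N).filter (fun i => i ≤ c) = Finset.Icc 1 c := by
    ext x
    simp only [Finset.mem_filter, Finset.mem_Icc]
    omega
  rw [hf, Finset.sum_const, smul_eq_mul, mul_one, Nat.card_Icc]
  omega

def H (v : ℕ) : ℕ := ∑ i ∈ Finset.Icc 1 v, a^[i] v

lemma H_zero : H 0 = 0 := by simp [H]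

lemma H_step (v : ℕ) : H (v+1) = H v + e (v+1) := by
  unfold H
  have h1 : ∀ i ∈ Finset.Icc 1 (v+1), a^[i] (v+1) = a^[i] v + (if i ≤ e (v+1) then 1 else 0) := by
    intro i hi
    simp only [Finset.mem_Icc] at hi
    exact iter_incr i hi.1 v
  rw [Finset.sum_congr rfl h1, Finset.sum_add_distrib]
  have h2 : (∑ i ∈ Finset.Icc 1 (v+1), a^[i] v) = ∑ i ∈ Finset.Icc 1 v, a^[i] v := by
    rw [Finset.sum_Icc_succ_top (by omega : 1 ≤ v+1)]
    rw [iter_zero (v+1) v (by omega)]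
    simp
  have h3 : e (v+1) ≤ v + 1 := by
    have := e_le_a (v+1) (by omega)
    have := a_lt (v+1) (by omega)
    omega
  rw [h2, sum_indicator _ _ h3]

lemma PHI : ∀ v, 1 ≤ v → ph v = 2*v + H (v-1) := by
  intro v hv
  induction v, hv using Nat.le_induction with
  | base => rw [ph_one]; simp [H_zero]
  | succ v hv IH =>
    rw [ph_succ v hv, IH]
    simp only [Nat.add_sub_cancel]
    have hH : H v = H (v-1) + e v := by
      obtain ⟨v', rfl⟩ : ∃ v', v = v' + 1 := ⟨v - 1, by omega⟩
      simpa using H_step v'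
    omega

-- ===== small values =====
lemma f2 : a 2 = 1 ∧ e 2 = 1 ∧ q 2 = 2 ∧ E 2 = 1 := by
  have hc : 0 + 2 = q (0+1) + 1 + E (0+1) := by simp
  have h2 : a (0+1) + 1 ≤ 0 + 1 := by simp
  obtain ⟨sa, se, sq, sE⟩ := step_true hc h2
  simp only [zero_add] at sa se sq sE
  rw [sa, se, sq, sE]
  simp

lemma a3 : a 3 = 1 := by
  have hc : ¬ (1 + 2 = q (1+1) + 1 + E (1+1)) := by
    rw [show (1+1 : ℕ) = 2 from rfl, f2.2.2.1, f2.2.2.2]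
    omega
  have := (step_false hc).1
  rw [show (1+2 : ℕ) = 3 from rfl, show (1+1 : ℕ) = 2 from rfl] at this
  rw [this, f2.1]

-- ===== Fibonacci facts =====
lemma fib_lb : ∀ m : ℕ, m + 1 ≤ Nat.fib (m + 2) := by
  intro m
  rcases Nat.lt_or_ge m 4 with h | h
  · interval_cases m <;> decide
  · have := Nat.le_fib_self (show 5 ≤ m + 2 by omega)
    omega

lemma fib_sum_even : ∀ k : ℕ, (∑ j ∈ Finset.Icc 1 k, Nat.fib (2*j)) + 1 = Nat.fib (2*k+1) := by
  intro k
  induction k with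
  | zero => simp
  | succ k IH =>
    rw [Finset.sum_Icc_succ_top (by omega : 1 ≤ k+1)]
    have h1 := Nat.fib_add_two (n := 2*k+1)
    rw [show 2*k+1+2 = 2*(k+1)+1 by ring, show 2*k+1+1 = 2*(k+1) by ring] at h1
    omega

theorem A_fib : ∀ k : ℕ, a (Nat.fib (2*k)) = Nat.fib (2*k - 2) := by
  intro k
  induction k using Nat.strong_induction_on with
  | _ k IH =>
    match k with
    | 0 => simp
    | 1 => simp
    | 2 => show a 3 = Nat.fib 2; rw [a3]; simp
    | (m+3) =>
      set k := m + 3 with hk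
      -- chain
      have CH : ∀ i, a^[i] (Nat.fib (2*k - 2)) = Nat.fib (2*k - 2 - 2*i) := by
        intro i
        induction i with
        | zero => simp
        | succ i IHi =>
          rw [Function.iterate_succ_apply', IHi]
          rcases Nat.lt_or_ge (2*k - 2 - 2*i) 3 with hsm | hbig
          · -- small cases: 0,1,2 (even, so 0 or 2)
            have h' : 2*k - 2 - 2*(i+1) = 0 := by omega
            have : 2*k - 2 - 2*i = 0 ∨ 2*k - 2 - 2*i = 2 := by omega
            rcases this with h | h <;> rw [h, h'] <;> simp
          · obtain ⟨j, hj1, hj2, hj3⟩ : ∃ j, 2*k - 2 - 2*i = 2*j ∧ 2 ≤ j ∧ j < k := ⟨k - 1 - i, by omega, by omega, by omega⟩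
            rw [hj1, IH j hj3]
            congr 1
            omega
      -- H evaluation
      have HM : H (Nat.fib (2*k - 2)) + 1 = Nat.fib (2*k - 3) := by
        unfold H
        have hMk : k - 2 ≤ Nat.fib (2*k - 2) := by
          have := fib_lb (2*k - 4)
          have h4 : 2*k - 4 + 2 = 2*k - 2 := by omega
          rw [h4] at this
          omega
        have hzero : ∀ i ∈ Finset.Icc 1 (Nat.fib (2*k-2)), i ∉ Finset.Icc 1 (k-2) → a^[i] (Nat.fib (2*k-2)) = 0 := by
          intro i hi hni
          simp only [Finset.mem_Icc] at hi hni
          rw [CH i]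
          have : 2*k - 2 - 2*i = 0 := by omega
          rw [this]; simp
        rw [← Finset.sum_subset (Finset.Icc_subset_Icc_right hMk) hzero]
        have hre : (∑ i ∈ Finset.Icc 1 (k-2), a^[i] (Nat.fib (2*k-2)))
            = ∑ j ∈ Finset.Icc 1 (k-2), Nat.fib (2*j) := by
          rw [Finset.sum_nbij' (fun i => k - 1 - i) (fun j => k - 1 - j)]
          · intro i hi; simp only [Finset.mem_Icc] at hi ⊢; omega
          · intro j hj; simp only [Finset.mem_Icc] at hj ⊢; omega
          · intro i hi; simp only [Finset.mem_Icc] at hi; omega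
          · intro j hj; simp only [Finset.mem_Icc] at hj; omega
          · intro i hi
            simp only [Finset.mem_Icc] at hi
            rw [CH i]
            congr 1
            omega
        rw [hre]
        have := fib_sum_even (k-2)
        have h5 : 2*(k-2)+1 = 2*k - 3 := by omega
        rwa [h5] at this
      -- PHI evaluation
      have hphw : ph (Nat.fib (2*k-2) + 1) = Nat.fib (2*k) + 1 := by
        rw [PHI _ (by omega)]
        simp only [Nat.add_sub_cancel]
        have hf1 := Nat.fib_add_two (n := 2*k-2)
        rw [show 2*k-2+2 = 2*k by omega, show 2*k-2+1 = 2*k-1 by omega] at hf1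
        have hf2 := Nat.fib_add_two (n := 2*k-3)
        rw [show 2*k-3+2 = 2*k-1 by omega, show 2*k-3+1 = 2*k-2 by omega] at hf2
        omega
      -- conclude
      have hstart := q_ph (Nat.fib (2*k-2) + 1)
      have haw := a_ph (Nat.fib (2*k-2) + 1)
      rw [hphw] at hstart haw
      have h2 : 2 ≤ Nat.fib (2*k) + 1 := by
        have := fib_lb (2*k - 2)
        have : 1 ≤ Nat.fib (2*k) := by
          have := Nat.fib_pos.2 (show 0 < 2*k by omega)
          omega
        omega
      have := a_step (Nat.fib (2*k) + 1) h2
      rw [if_pos hstart, haw] at this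
      simp only [Nat.add_sub_cancel] at this
      omega

-- ===== the nested sum identity =====
def S (n : ℕ) : ℕ := ∑ i ∈ Finset.Icc 1 n, a^[i] (n - i)

lemma cover_mem {n i : ℕ} (h1 : 1 ≤ i) (h2 : i ≤ n) (hie : i ≤ e (n+1-i)) :
    q (n+1) = n+1-i := by
  have hy1 : 1 ≤ n+1-i := by omega
  have hrs : 2 ≤ n+1-i ∧ q (n+1-i) = n+1-i := (e_pos_iff _).1 (by omega)
  have hE : E (n+1-i) = e (n+1-i) := by
    rw [E_eq _ hy1, hrs.2]
  have := (run_const (n+1-i) hy1 (n+1) (by omega) (by omega)).1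
  rw [this, hrs.2]

lemma cover_sum (n : ℕ) (h : 1 ≤ n) :
    (∑ i ∈ Finset.Icc 1 n, (if i ≤ e (n+1-i) then 1 else 0))
      = if q (n+1) = n+1 then 0 else 1 := by
  rw [← Finset.sum_filter]
  by_cases hq : q (n+1) = n+1
  · rw [if_pos hq]
    have hf : (Finset.Icc 1 n).filter (fun i => i ≤ e (n+1-i)) = ∅ := by
      ext i
      simp only [Finset.mem_filter, Finset.mem_Icc, Finset.notMem_empty, iff_false, not_and]
      rintro ⟨hi1, hi2⟩ hie
      have := cover_mem hi1 hi2 hie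
      omega
    rw [hf, Finset.sum_empty]
  · rw [if_neg hq]
    have hy1 : 1 ≤ q (n+1) := q_pos (n+1) (by omega)
    have hyle : q (n+1) ≤ n := by
      have := q_le (n+1) (by omega)
      omega
    have hcov : n + 1 ≤ q (n+1) + e (q (n+1)) := by
      have h1 := le_qE (n+1) (by omega)
      have h2 := E_eq (n+1) (by omega)
      omega
    have hf : (Finset.Icc 1 n).filter (fun i => i ≤ e (n+1-i)) = {n+1-q (n+1)} := by
      ext i
      simp only [Finset.mem_filter, Finset.mem_Icc, Finset.mem_singleton]
      constructor
      · rintro ⟨⟨hi1, hi2⟩, hie⟩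
        have := cover_mem hi1 hi2 hie
        omega
      · intro hi
        have h1 : 1 ≤ i := by omega
        have h2 : i ≤ n := by omega
        have h3 : n+1-i = q (n+1) := by omega
        refine ⟨⟨h1, h2⟩, ?_⟩
        rw [h3]
        omega
    rw [hf, Finset.sum_singleton]

lemma sum_id : ∀ n, 1 ≤ n → a n + S n + 1 = n := by
  intro n hn
  induction n, hn using Nat.le_induction with
  | base =>
    have : S 1 = 0 := by
      unfold S
      rw [Finset.Icc_self, Finset.sum_singleton]
      simp
    rw [this]
    simp
  | succ n hn IH =>
    have hS : S (n+1) = S n + (∑ i ∈ Finset.Icc 1 n, (if i ≤ e (n+1-i) then 1 else 0)) := by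
      unfold S
      rw [Finset.sum_Icc_succ_top (by omega : 1 ≤ n+1)]
      rw [show n + 1 - (n+1) = 0 by omega, iter_zero (n+1) 0 (by omega)]
      have hterm : ∀ i ∈ Finset.Icc 1 n,
          a^[i] (n+1-i) = a^[i] (n-i) + (if i ≤ e (n+1-i) then 1 else 0) := by
        intro i hi
        simp only [Finset.mem_Icc] at hi
        have h1 : n + 1 - i = (n - i) + 1 := by omega
        rw [h1, iter_incr i hi.1 (n-i), ← h1]
      rw [Finset.sum_congr rfl hterm, Finset.sum_add_distrib]
      omega
    rw [hS, cover_sum n hn]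
    have ha := a_succ n
    by_cases hq : q (n+1) = n+1
    · rw [if_pos hq] at *
      rw [if_pos ⟨by omega, hq⟩] at ha
      omega
    · rw [if_neg hq] at *
      rw [if_neg (by tauto)] at ha
      omega

lemma a_le_self (m : ℕ) : a m ≤ m := by
  rcases Nat.eq_zero_or_pos m with h | h
  · subst h; simp
  · have := a_lt m h; omega

end IT

theorem infinite_terms_fib' (b : ℤ → ℤ)
    (h0 : ∀ n : ℤ, n ≤ 0 → b n = 0)
    (hrec : ∀ n : ℤ, 1 ≤ n →
      b n = n - 1 - ∑ i ∈ Finset.Icc 1 n.toNat, b^[i] (n - i)) :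
    ∀ n : ℕ, b (n : ℤ) = (IT.a n : ℤ) := by
  intro n
  induction n using Nat.strong_induction_on with
  | _ n IH =>
    rcases Nat.eq_zero_or_pos n with h | hpos
    · subst h
      have hb := h0 ((0:ℕ):ℤ) (by simp)
      rw [hb]
      simp
    · -- iteration lemma
      have ITER : ∀ i : ℕ, ∀ m : ℤ, m ≤ (n : ℤ) - 1 →
          b^[i+1] m = (IT.a^[i+1] m.toNat : ℤ) := by
        intro i
        induction i with
        | zero =>
          intro m hm
          simp only [zero_add, Function.iterate_one]
          rcases le_or_gt m 0 with hm0 | hm1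
          · rw [h0 m hm0, show m.toNat = 0 by omega]
            simp
          · have : m = ((m.toNat : ℕ) : ℤ) := by omega
            rw [this]
            exact IH m.toNat (by omega)
        | succ i IHi =>
          intro m hm
          rw [Function.iterate_succ_apply]
          have hbm : b m = (IT.a m.toNat : ℤ) := by
            rcases le_or_gt m 0 with hm0 | hm1
            · rw [h0 m hm0, show m.toNat = 0 by omega]; simp
            · have : m = ((m.toNat : ℕ) : ℤ) := by omega
              rw [this]
              exact IH m.toNat (by omega)
          rw [hbm]
          have hle : (IT.a m.toNat : ℤ) ≤ (n : ℤ) - 1 := by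
            have h1 := IT.a_le_self m.toNat
            rcases le_or_gt m 0 with hm0 | hm1
            · have hz : m.toNat = 0 := by omega
              rw [hz]
              simp only [IT.a0, Nat.cast_zero]
              omega
            · have h2 : (m.toNat : ℤ) = m := by omega
              omega
          have hrec2 := IHi ((IT.a m.toNat : ℤ)) hle
          rw [hrec2, Int.toNat_natCast]
          rw [show IT.a^[i+1+1] m.toNat = IT.a^[i+1] (IT.a m.toNat) from
            Function.iterate_succ_apply _ _ _]
      have hn1 : (1 : ℤ) ≤ (n : ℤ) := by exact_mod_cast hpos
      rw [hrec (n : ℤ) hn1]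
      have htn : ((n : ℤ)).toNat = n := Int.toNat_natCast n
      rw [htn]
      have hterm : ∀ i ∈ Finset.Icc 1 n,
          b^[i] ((n : ℤ) - i) = (IT.a^[i] (n - i) : ℤ) := by
        intro i hi
        simp only [Finset.mem_Icc] at hi
        obtain ⟨i', rfl⟩ : ∃ i', i = i' + 1 := ⟨i - 1, by omega⟩
        have h1 : ((n : ℤ) - (i'+1 : ℕ)) ≤ (n : ℤ) - 1 := by
          have : (1 : ℤ) ≤ ((i'+1 : ℕ) : ℤ) := by exact_mod_cast Nat.one_le_iff_ne_zero.2 (by omega)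
          omega
        rw [ITER i' _ h1]
        have harg : ((n:ℤ) - ((i'+1 : ℕ) : ℤ)).toNat = n - (i'+1) := by omega
        rw [harg]
      rw [Finset.sum_congr rfl hterm]
      have hsum : (∑ i ∈ Finset.Icc 1 n, (IT.a^[i] (n - i) : ℤ)) = ((IT.S n : ℕ) : ℤ) := by
        rw [IT.S]
        push_cast
        rfl
      rw [hsum]
      have := IT.sum_id n hpos
      omega

/-- For the recurrence a(n) = n - 1 - Σ_{i≥1} a^i(n-i) (with a(n)=0 for n ≤ 0),
one has a(F_{2n}) = F_{2n-2} for n ≥ 1. -/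
theorem infinite_terms_fib (a : ℤ → ℤ)
    (h0 : ∀ n : ℤ, n ≤ 0 → a n = 0)
    (hrec : ∀ n : ℤ, 1 ≤ n →
      a n = n - 1 - ∑ i ∈ Finset.Icc 1 n.toNat, a^[i] (n - i)) :
    ∀ n : ℕ, 1 ≤ n →
      a (Nat.fib (2 * n)) = Nat.fib (2 * n - 2) := by
  intro n _
  have h1 := infinite_terms_fib' a h0 hrec (Nat.fib (2 * n))
  rw [h1, IT.A_fib n]
end

section
/- Let k ≥ 1 and let q(x) = (1-x)(r_0 + r_1 x + ... + r_k x^k) + r_{k+1} x^{k+1} with r_0 = -1, r_i ≥ 0 for i ≥ 1. If r_1 + r_2 + ... + r_{k+1} ≥ 2 then q has a root in the open interval (0,1). -/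
/-- If r_0 = -1, r_i ≥ 0 for 1 ≤ i ≤ k+1 and Σ_{i=1}^{k+1} r_i ≥ 2, then
q(x) = (1-x)(r_0 + r_1 x + ... + r_k x^k) + r_{k+1} x^{k+1} has a root in (0,1). -/
theorem q_has_root_in_unit_interval (k : ℕ) (hk : 1 ≤ k) (r : ℕ → ℤ)
    (hr0 : r 0 = -1)
    (hrpos : ∀ i, 1 ≤ i → 0 ≤ r i)
    (hsum : 2 ≤ ∑ i ∈ Finset.Icc 1 (k + 1), r i) :
    ∃ x : ℝ, 0 < x ∧ x < 1 ∧
      (1 - x) * (∑ i ∈ Finset.range (k + 1), (r i : ℝ) * x ^ i)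
        + (r (k + 1) : ℝ) * x ^ (k + 1) = 0 := by
  set p : ℝ → ℝ := fun x => ∑ i ∈ Finset.range (k + 1), (r i : ℝ) * x ^ i with hpdef
  have hpc : Continuous p := by
    apply continuous_finset_sum
    intro i _
    continuity
  have hp0 : p 0 = -1 := by
    rw [hpdef]
    simp only
    rw [Finset.sum_eq_single 0]
    · simp [hr0]
    · intro b _ hb; simp [zero_pow hb]
    · intro h; simp at h
  have hsum' : ∑ i ∈ Finset.Icc 1 (k+1), r i = ∑ i ∈ Finset.range (k+1), r (i+1) := by
    rw [← Finset.Ico_add_one_right_eq_Icc, Finset.sum_Ico_eq_sum_range]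
    simp [add_comm]
  have key : ∑ i ∈ Finset.range (k+2), r i = r 0 + ∑ i ∈ Finset.Icc 1 (k+1), r i := by
    rw [hsum', Finset.sum_range_succ' r (k+1)]
    ring
  by_cases h : r (k+1) = 0
  · -- p(1) > 0
    have hp1 : (1:ℤ) ≤ ∑ i ∈ Finset.range (k+1), r i := by
      have e1 : ∑ i ∈ Finset.range (k+2), r i
          = ∑ i ∈ Finset.range (k+1), r i + r (k+1) := Finset.sum_range_succ r (k+1)
      omega
    have hp1' : (0:ℝ) < p 1 := by
      rw [hpdef]
      simp only [one_pow, mul_one]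
      rw [← Int.cast_sum]
      exact_mod_cast lt_of_lt_of_le one_pos hp1
    have hmem : (0:ℝ) ∈ Set.Ioo (p 0) (p 1) := by
      rw [hp0]; exact ⟨by norm_num, hp1'⟩
    obtain ⟨x, hx, hpx⟩ := intermediate_value_Ioo (by norm_num : (0:ℝ) ≤ 1)
      hpc.continuousOn hmem
    refine ⟨x, hx.1, hx.2, ?_⟩
    have hz : (∑ i ∈ Finset.range (k+1), (r i : ℝ) * x ^ i) = 0 := hpx
    rw [hz]
    simp [h]
  · set f : ℝ → ℝ := fun x => (1 - x) * p x + (r (k+1) : ℝ) * x ^ (k+1) with hfdef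
    have hfc : Continuous f := by
      apply Continuous.add
      · exact (continuous_const.sub continuous_id).mul hpc
      · exact continuous_const.mul (continuous_pow _)
    have hf0 : f 0 = -1 := by simp [hfdef, hp0]
    have hf1 : (0:ℝ) < f 1 := by
      have : (1:ℤ) ≤ r (k+1) := by have := hrpos (k+1) (by omega); omega
      simp only [hfdef, sub_self, zero_mul, one_pow, mul_one, zero_add]
      exact_mod_cast lt_of_lt_of_le one_pos this
    have hmem : (0:ℝ) ∈ Set.Ioo (f 0) (f 1) := by
      rw [hf0]; exact ⟨by norm_num, hf1⟩
    obtain ⟨x, hx, hfx⟩ := intermediate_value_Ioo (by norm_num : (0:ℝ) ≤ 1)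
      hfc.continuousOn hmem
    exact ⟨x, hx.1, hx.2, hfx⟩
end

section
/- Let p(x) = (x-1)²(x^k - r_1 x^{k-1} - ... - r_{k-1}x - r_k) - r_{k+1}(x-1), with r_i nonnegative integers and r_1 + r_2 + ... + r_{k+1} ≥ 2. Then p has a real root strictly greater than 1. -/
lemma sum_pow_bound (k : ℕ) (r : ℕ → ℕ) (x : ℝ) (hx : 1 ≤ x) :
    ∑ i ∈ Finset.Icc 1 k, (r i : ℝ) * x ^ (k - i)
      ≤ (∑ i ∈ Finset.Icc 1 k, (r i : ℝ)) * x ^ (k - 1) := by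
  rw [Finset.sum_mul]
  apply Finset.sum_le_sum
  intro i hi
  have hi1 : 1 ≤ i := (Finset.mem_Icc.mp hi).1
  have hle : x ^ (k - i) ≤ x ^ (k - 1) := pow_le_pow_right₀ hx (by omega)
  exact mul_le_mul_of_nonneg_left hle (Nat.cast_nonneg _)

/-- If Σ_{i=1}^{k+1} r_i ≥ 2 then
p(x) = (x-1)²(x^k - Σ_{i=1}^k r_i x^{k-i}) - r_{k+1}(x-1) has a real root > 1. -/
theorem p_has_root_gt_one (k : ℕ) (hk : 1 ≤ k) (r : ℕ → ℕ)
    (hsum : 2 ≤ ∑ i ∈ Finset.Icc 1 (k + 1), r i) :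
    ∃ x : ℝ, 1 < x ∧
      (x - 1) ^ 2 * (x ^ k - ∑ i ∈ Finset.Icc 1 k, (r i : ℝ) * x ^ (k - i))
        - (r (k + 1) : ℝ) * (x - 1) = 0 := by
  set S : ℝ → ℝ := fun x => ∑ i ∈ Finset.Icc 1 k, (r i : ℝ) * x ^ (k - i) with hS
  have hScont : Continuous S :=
    continuous_finset_sum _ fun i _ => continuous_const.mul (continuous_pow _)
  set R : ℝ := ∑ i ∈ Finset.Icc 1 k, (r i : ℝ) with hR
  have hRnn : 0 ≤ R := Finset.sum_nonneg fun i _ => Nat.cast_nonneg _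
  have hsplit : (∑ i ∈ Finset.Icc 1 (k + 1), (r i : ℝ))
      = R + (r (k + 1) : ℝ) := by
    rw [hR, ← Finset.sum_Icc_succ_top (by omega : 1 ≤ k + 1)]
  have hsumR : (2 : ℝ) ≤ R + (r (k + 1) : ℝ) := by
    rw [← hsplit]
    exact_mod_cast hsum
  by_cases hr : r (k + 1) = 0
  · -- case r_{k+1} = 0 : find root of x^k - S x
    have hR2 : (2 : ℝ) ≤ R := by rw [hr] at hsumR; simpa using hsumR
    set f : ℝ → ℝ := fun x => x ^ k - S x with hf
    have hfcont : Continuous f := (continuous_pow k).sub hScont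
    set B : ℝ := R + 1 with hB
    have hB1 : (1 : ℝ) ≤ B := by linarith
    have hS1 : S 1 = R := by simp [hS, hR]
    have hf1 : f 1 < 0 := by
      have : f 1 = 1 - R := by simp only [hf, one_pow, hS1]
      linarith
    have hfB : 0 < f B := by
      have hb1 : (1 : ℝ) ≤ B := hB1
      have h1 : S B ≤ R * B ^ (k - 1) := sum_pow_bound k r B hb1
      have h2 : B ^ k = B ^ (k - 1) * B := by
        rw [← pow_succ]; congr 1; omega
      have h3 : (1 : ℝ) ≤ B ^ (k - 1) := one_le_pow₀ hb1
      have : f B ≥ B ^ (k - 1) * B - R * B ^ (k - 1) := by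
        simp only [hf]; rw [h2]; linarith
      have : B ^ (k - 1) * B - R * B ^ (k - 1) = B ^ (k - 1) * (B - R) := by ring
      nlinarith [h3, h1]
    have := intermediate_value_Icc hB1 hfcont.continuousOn
    have h0 : (0 : ℝ) ∈ Set.Icc (f 1) (f B) := ⟨le_of_lt hf1, le_of_lt hfB⟩
    obtain ⟨x, hx, hfx⟩ := this h0
    refine ⟨x, lt_of_le_of_ne hx.1 ?_, ?_⟩
    · intro h; rw [← h] at hfx; exact absurd hfx (ne_of_lt hf1)
    · rw [hr]; push_cast
      have : x ^ k - S x = 0 := hfx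
      simp only [hS] at this
      rw [this]; ring
  · -- case r_{k+1} ≥ 1 : find root of (x-1)(x^k - S x) - r_{k+1}
    have hr1 : (1 : ℝ) ≤ (r (k + 1) : ℝ) := by
      exact_mod_cast Nat.one_le_iff_ne_zero.mpr hr
    set g : ℝ → ℝ := fun x => (x - 1) * (x ^ k - S x) - (r (k + 1) : ℝ) with hg
    have hgcont : Continuous g :=
      ((continuous_id.sub continuous_const).mul
        ((continuous_pow k).sub hScont)).sub continuous_const
    set B : ℝ := R + (r (k + 1) : ℝ) + 2 with hB
    have hB1 : (1 : ℝ) ≤ B := by linarith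
    have hg1 : g 1 < 0 := by
      have : g 1 = -(r (k + 1) : ℝ) := by simp [hg]
      linarith
    have hgB : 0 < g B := by
      have h1 : S B ≤ R * B ^ (k - 1) := sum_pow_bound k r B hB1
      have h2 : B ^ k = B ^ (k - 1) * B := by
        rw [← pow_succ]; congr 1; omega
      have h3 : (1 : ℝ) ≤ B ^ (k - 1) := one_le_pow₀ hB1
      have h4 : B ^ k - S B ≥ B ^ (k - 1) * (B - R) := by
        rw [h2]; nlinarith
      have h5 : B ^ (k - 1) * (B - R) ≥ B - R := by nlinarith
      have h6 : B ^ k - S B ≥ (r (k + 1) : ℝ) + 2 := by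
        have : B - R = (r (k + 1) : ℝ) + 2 := by rw [hB]; ring
        linarith
      simp only [hg]
      nlinarith
    have := intermediate_value_Icc hB1 hgcont.continuousOn
    have h0 : (0 : ℝ) ∈ Set.Icc (g 1) (g B) := ⟨le_of_lt hg1, le_of_lt hgB⟩
    obtain ⟨x, hx, hgx⟩ := this h0
    refine ⟨x, lt_of_le_of_ne hx.1 ?_, ?_⟩
    · intro h; rw [← h] at hgx; exact absurd hgx (ne_of_lt hg1)
    · have : (x - 1) * (x ^ k - S x) - (r (k + 1) : ℝ) = 0 := hgx
      simp only [hS] at this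
      linear_combination (x - 1) * this
end
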